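/- arXiv:1910.04131 — 5 statements merged into one kernel-verified Lean document; each statement's English description precedes it below -/
import Mathlib

section
/- For any real C, the function T(ξ) = -ξ^{8/3} + Cξ² + 3 has a unique positive zero ξ₀₂, and T(ξ) > 0 for all ξ ∈ (0, ξ₀₂); moreover if C > 0 then ξ₀₂ > (3C/4)^{3/2}. -/
open Set

/-- For any real `C`, `T ξ = -ξ^(8/3) + C ξ² + 3` has a unique positive zero `ξ02`,
`T > 0` on `(0, ξ02)`, and if `C > 0` then `ξ02 > (3C/4)^(3/2)`. -/
theorem stmt_3 (C : ℝ) :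
    ∃ ξ02 : ℝ, 0 < ξ02 ∧ (-ξ02 ^ ((8:ℝ)/3) + C * ξ02 ^ 2 + 3 = 0) ∧
      (∀ ξ : ℝ, 0 < ξ → -ξ ^ ((8:ℝ)/3) + C * ξ ^ 2 + 3 = 0 → ξ = ξ02) ∧
      (∀ ξ ∈ Ioo (0:ℝ) ξ02, 0 < -ξ ^ ((8:ℝ)/3) + C * ξ ^ 2 + 3) ∧
      (0 < C → (3 * C / 4) ^ ((3:ℝ)/2) < ξ02) := by
  set T : ℝ → ℝ := fun ξ => -ξ ^ ((8:ℝ)/3) + C * ξ ^ 2 + 3 with hT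
  set g : ℝ → ℝ := fun ξ => -ξ ^ ((2:ℝ)/3) + C + 3 / ξ ^ 2 with hg
  have hTg : ∀ x : ℝ, 0 < x → T x = x ^ 2 * g x := by
    intro x hx
    have h8 : x ^ ((8:ℝ)/3) = x ^ (2:ℕ) * x ^ ((2:ℝ)/3) := by
      rw [← Real.rpow_natCast x 2, ← Real.rpow_add hx]
      norm_num
    have hx2 : (x:ℝ) ^ 2 ≠ 0 := by positivity
    simp only [hT, hg, h8]
    field_simp
  have hganti : ∀ x y : ℝ, 0 < x → x < y → g y < g x := by
    intro x y hx hxy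
    have hy : 0 < y := hx.trans hxy
    have h1 : x ^ ((2:ℝ)/3) < y ^ ((2:ℝ)/3) :=
      Real.rpow_lt_rpow hx.le hxy (by norm_num)
    have h2 : 3 / y ^ 2 < 3 / x ^ 2 := by
      apply div_lt_div_of_pos_left (by norm_num) (by positivity)
      nlinarith
    simp only [hg]
    linarith
  -- endpoints for IVT
  have habs : (0:ℝ) ≤ |C| := abs_nonneg C
  have hCabs : C ≤ |C| := le_abs_self C
  have hCneg : -|C| ≤ C := neg_abs_le C
  set a : ℝ := min 1 (1/(1+|C|)) with ha
  have ha0 : 0 < a := lt_min one_pos (by positivity)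
  have ha1 : a ≤ 1 := min_le_left _ _
  have haC : a * (1 + |C|) ≤ 1 := by
    have h := min_le_right (1:ℝ) (1/(1+|C|))
    rw [← ha, le_div_iff₀ (by positivity)] at h
    linarith
  have hTa : 0 < T a := by
    have h1 : a ^ ((8:ℝ)/3) ≤ a ^ ((1:ℝ)) :=
      Real.rpow_le_rpow_of_exponent_ge ha0 ha1 (by norm_num)
    rw [Real.rpow_one] at h1
    have h2 : a ^ 2 ≤ a := by nlinarith
    have h3 : (0:ℝ) < a ^ 2 := by positivity
    have h4 : -|C| * a ^ 2 ≤ C * a ^ 2 := mul_le_mul_of_nonneg_right hCneg h3.le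
    simp only [hT]
    nlinarith
  set M : ℝ := |C| + 4 with hM
  have hM4 : (4:ℝ) ≤ M := by simp only [hM]; linarith
  have hM0 : (0:ℝ) < M := by linarith
  set b : ℝ := M ^ ((3:ℝ)/2) with hb
  have hb0 : 0 < b := Real.rpow_pos_of_pos hM0 _
  have hb83 : b ^ ((8:ℝ)/3) = M ^ (4:ℕ) := by
    rw [hb, ← Real.rpow_natCast M 4, ← Real.rpow_mul hM0.le]
    norm_num
  have hb2 : b ^ (2:ℕ) = M ^ (3:ℕ) := by
    rw [hb, ← Real.rpow_natCast M 3, ← Real.rpow_natCast (M ^ ((3:ℝ)/2)) 2,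
      ← Real.rpow_mul hM0.le]
    norm_num
  have hTb : T b < 0 := by
    simp only [hT, hb83, hb2]
    have hC' : C ≤ M - 4 := by simp only [hM]; linarith
    have hM3 : (0:ℝ) < M ^ 3 := by positivity
    nlinarith [mul_le_mul_of_nonneg_right hC' hM3.le,
      pow_le_pow_left₀ (by norm_num : (0:ℝ) ≤ 4) hM4 3]
  have hab : a < b := by
    have h1b : (1:ℝ) < b := by
      rw [hb, Real.one_lt_rpow_iff_of_pos hM0]
      exact Or.inl ⟨by linarith, by norm_num⟩
    linarith
  have hcont : ContinuousOn T (Icc a b) := by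
    simp only [hT]
    exact ((continuousOn_id.rpow_const (fun x _ => Or.inr (by norm_num))).neg.add
      (continuousOn_const.mul (continuous_pow 2).continuousOn)).add continuousOn_const
  have h0mem : (0:ℝ) ∈ Icc (T b) (T a) := ⟨hTb.le, hTa.le⟩
  obtain ⟨ξ02, hmem, hzero⟩ := intermediate_value_Icc' hab.le hcont h0mem
  have hξ0 : 0 < ξ02 := lt_of_lt_of_le ha0 hmem.1
  have hgzero : g ξ02 = 0 := by
    have h := hTg ξ02 hξ0
    rw [hzero] at h
    have h2 : (ξ02:ℝ) ^ 2 ≠ 0 := by positivity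
    rcases mul_eq_zero.mp h.symm with h' | h'
    · exact absurd h' h2
    · exact h'
  refine ⟨ξ02, hξ0, hzero, ?_, ?_, ?_⟩
  · intro ξ hξ hTξ
    have hgξ : g ξ = 0 := by
      have h := hTg ξ hξ
      have h0 : T ξ = 0 := hTξ
      rw [h0] at h
      have h2 : (ξ:ℝ) ^ 2 ≠ 0 := by positivity
      rcases mul_eq_zero.mp h.symm with h' | h'
      · exact absurd h' h2
      · exact h'
    rcases lt_trichotomy ξ ξ02 with h | h | h
    · have := hganti ξ ξ02 hξ h
      rw [hgξ, hgzero] at this; linarith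
    · exact h
    · have := hganti ξ02 ξ hξ0 h
      rw [hgξ, hgzero] at this; linarith
  · intro x hx
    have hgx : 0 < g x := by
      have := hganti x ξ02 hx.1 hx.2
      rw [hgzero] at this; linarith
    have h2 : (0:ℝ) < x ^ 2 := pow_pos hx.1 2
    have hpos : 0 < T x := by rw [hTg x hx.1]; exact mul_pos h2 hgx
    exact hpos
  · intro hC
    set w : ℝ := (3 * C / 4) ^ ((3:ℝ)/2) with hw
    have hu : (0:ℝ) < 3 * C / 4 := by linarith
    have hw0 : 0 < w := Real.rpow_pos_of_pos hu _
    have hw83 : w ^ ((8:ℝ)/3) = (3 * C / 4) ^ (4:ℕ) := by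
      rw [hw, ← Real.rpow_natCast (3 * C / 4) 4, ← Real.rpow_mul hu.le]
      norm_num
    have hw2 : w ^ (2:ℕ) = (3 * C / 4) ^ (3:ℕ) := by
      rw [hw, ← Real.rpow_natCast (3 * C / 4) 3,
        ← Real.rpow_natCast ((3 * C / 4) ^ ((3:ℝ)/2)) 2, ← Real.rpow_mul hu.le]
      norm_num
    have hTw : 0 < T w := by
      simp only [hT, hw83, hw2]
      nlinarith [pow_pos hu 4]
    have hgw : 0 < g w := by
      have h := hTg w hw0
      have h2 : (0:ℝ) < w ^ 2 := by positivity
      rw [h] at hTw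
      rcases mul_pos_iff.mp hTw with ⟨_, hg'⟩ | ⟨h1, _⟩
      · exact hg'
      · linarith
    rcases lt_trichotomy w ξ02 with h | h | h
    · exact h
    · rw [h, hgzero] at hgw; linarith
    · have := hganti ξ02 w hξ0 h
      rw [hgzero] at this; linarith
end

section
/- Let C > 4/√3 and let ξ₀₁ < ξ₀₂ be the two positive zeros of T(ξ) = -ξ^{8/3} + Cξ² - 3. Fix ξ₀₀ ∈ (ξ₀₁, ξ₀₂) and define ρ₀(ξ) = -∫_{ξ₀₀}^{ξ} √(3/(τ²·T(τ))) dτ for ξ ∈ (ξ₀₁, ξ₀₂). Then ρ₀ is strictly decreasing, and the limits of ρ₀(ξ) as ξ ↘ ξ₀₁ and as ξ ↗ ξ₀₂ are both finite, with the first limit positive and the second negative. -/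
open Set Filter

open MeasureTheory intervalIntegral

/-- The function `ρ₀(ξ) = -∫_{ξ00}^{ξ} √(3/(τ² T(τ))) dτ`, where `T τ = -τ^(8/3) + C τ² - 3`. -/
noncomputable def rho0 (C ξ00 ξ : ℝ) : ℝ :=
  -∫ τ in ξ00..ξ, Real.sqrt (3 / (τ ^ 2 * (-τ ^ ((8:ℝ)/3) + C * τ ^ 2 - 3)))

lemma rho_aux_mono {f g : ℝ → ℝ} {u v : ℝ} (hu : 0 < u)
    (hf : ∀ x : ℝ, 0 < x → HasDerivAt f (g x) x) (hg : ∀ x ∈ Ioo u v, 0 ≤ g x) :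
    MonotoneOn f (Icc u v) := by
  apply monotoneOn_of_deriv_nonneg (convex_Icc u v)
  · exact fun x hx => (hf x (hu.trans_le hx.1)).continuousAt.continuousWithinAt
  · intro x hx
    rw [interior_Icc] at hx
    exact (hf x (hu.trans hx.1)).differentiableAt.differentiableWithinAt
  · intro x hx
    rw [interior_Icc] at hx
    rw [(hf x (hu.trans hx.1)).deriv]
    exact hg x hx

lemma rho_aux_anti {f g : ℝ → ℝ} {u v : ℝ} (hu : 0 < u)
    (hf : ∀ x : ℝ, 0 < x → HasDerivAt f (g x) x) (hg : ∀ x ∈ Ioo u v, g x ≤ 0) :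
    AntitoneOn f (Icc u v) := by
  apply antitoneOn_of_deriv_nonpos (convex_Icc u v)
  · exact fun x hx => (hf x (hu.trans_le hx.1)).continuousAt.continuousWithinAt
  · intro x hx
    rw [interior_Icc] at hx
    exact (hf x (hu.trans hx.1)).differentiableAt.differentiableWithinAt
  · intro x hx
    rw [interior_Icc] at hx
    rw [(hf x (hu.trans hx.1)).deriv]
    exact hg x hx

set_option maxHeartbeats 1000000 in
/-- For `C > 4/√3` and `ξ01 < ξ02` the two positive zeros of `T ξ = -ξ^(8/3)+Cξ²-3`,
with `ξ00 ∈ (ξ01, ξ02)`, the function `ρ₀` is strictly decreasing on `(ξ01, ξ02)` and has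
finite limits at both endpoints, positive at `ξ01` and negative at `ξ02`. -/
theorem stmt_4 (C ξ01 ξ02 ξ00 : ℝ) (hC : C > 4 / Real.sqrt 3)
    (h01 : 0 < ξ01) (h12 : ξ01 < ξ02)
    (hz1 : -ξ01 ^ ((8:ℝ)/3) + C * ξ01 ^ 2 - 3 = 0)
    (hz2 : -ξ02 ^ ((8:ℝ)/3) + C * ξ02 ^ 2 - 3 = 0)
    (hpos : ∀ ξ ∈ Ioo ξ01 ξ02, 0 < -ξ ^ ((8:ℝ)/3) + C * ξ ^ 2 - 3)
    (h00 : ξ00 ∈ Ioo ξ01 ξ02) :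
    StrictAntiOn (rho0 C ξ00) (Ioo ξ01 ξ02) ∧
    ∃ L1 L2 : ℝ, 0 < L1 ∧ L2 < 0 ∧
      Tendsto (rho0 C ξ00) (nhdsWithin ξ01 (Ioi ξ01)) (nhds L1) ∧
      Tendsto (rho0 C ξ00) (nhdsWithin ξ02 (Iio ξ02)) (nhds L2) := by
  have hCpos : 0 < C := lt_trans (div_pos (by norm_num) (Real.sqrt_pos.mpr (by norm_num))) hC
  set T : ℝ → ℝ := fun t => -t ^ ((8:ℝ)/3) + C * t ^ 2 - 3 with hTdef
  set D : ℝ → ℝ := fun t => 2 * C * t - 8/3 * t ^ ((5:ℝ)/3) with hDdef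
  set F : ℝ → ℝ := fun τ => Real.sqrt (3 / (τ ^ 2 * T τ)) with hFdef
  have hrho : ∀ ξ, rho0 C ξ00 ξ = -∫ τ in ξ00..ξ, F τ := fun ξ => rfl
  -- derivative of T
  have hT' : ∀ x : ℝ, 0 < x → HasDerivAt T (D x) x := by
    intro x hx
    have h1 : HasDerivAt (fun t : ℝ => t ^ ((8:ℝ)/3)) ((8:ℝ)/3 * x ^ ((8:ℝ)/3 - 1)) x :=
      Real.hasDerivAt_rpow_const (Or.inl hx.ne')
    have h2 : HasDerivAt (fun t : ℝ => C * t ^ 2) (C * (2 * x)) x := by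
      simpa using (hasDerivAt_pow 2 x).const_mul C
    have h3 := (h1.neg.add h2).sub_const 3
    refine h3.congr_deriv ?_
    show _ = 2 * C * x - 8/3 * x ^ ((5:ℝ)/3)
    rw [show (8:ℝ)/3 - 1 = 5/3 by norm_num]
    ring
  -- factorization of D
  have hDfac : ∀ x : ℝ, 0 < x → D x = x * (2 * C - 8/3 * x ^ ((2:ℝ)/3)) := by
    intro x hx
    have h5 : x ^ ((5:ℝ)/3) = x * x ^ ((2:ℝ)/3) := by
      rw [show (5:ℝ)/3 = 1 + 2/3 by norm_num, Real.rpow_add hx, Real.rpow_one]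
    simp only [hDdef, h5]; ring
  set s : ℝ := (3 * C / 4) ^ ((3:ℝ)/2) with hsdef
  have hsC : 0 < 3 * C / 4 := by linarith
  have hs23 : s ^ ((2:ℝ)/3) = 3 * C / 4 := by
    rw [hsdef, ← Real.rpow_mul hsC.le]
    norm_num
  have hrpow_le : ∀ x y : ℝ, 0 ≤ x → x ≤ y → x ^ ((2:ℝ)/3) ≤ y ^ ((2:ℝ)/3) :=
    fun x y hx hxy => Real.rpow_le_rpow hx hxy (by norm_num)
  have hrpow_lt : ∀ x y : ℝ, 0 ≤ x → x < y → x ^ ((2:ℝ)/3) < y ^ ((2:ℝ)/3) :=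
    fun x y hx hxy => Real.rpow_lt_rpow hx hxy (by norm_num)
  have hz1' : T ξ01 = 0 := hz1
  have hz2' : T ξ02 = 0 := hz2
  have hpos' : ∀ ξ ∈ Ioo ξ01 ξ02, 0 < T ξ := hpos
  -- ξ01 < s
  have h1s : ξ01 < s := by
    by_contra h
    push_neg at h
    have hanti : AntitoneOn T (Icc ξ01 ξ02) := by
      refine rho_aux_anti (g := D) h01 hT' ?_
      intro x hx
      rw [hDfac x (h01.trans hx.1)]
      have h1 : 3 * C / 4 ≤ x ^ ((2:ℝ)/3) := by
        rw [← hs23]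
        exact hrpow_le _ _ (Real.rpow_nonneg hsC.le _) (h.trans hx.1.le)
      have h2 : 2 * C - 8/3 * x ^ ((2:ℝ)/3) ≤ 0 := by linarith
      exact mul_nonpos_of_nonneg_of_nonpos (h01.trans hx.1).le h2
    have hle : T ξ00 ≤ T ξ01 := hanti (left_mem_Icc.mpr h12.le) ⟨h00.1.le, h00.2.le⟩ h00.1.le
    rw [hz1'] at hle
    exact absurd (hpos' ξ00 h00) hle.not_gt
  -- s < ξ02
  have hs2 : s < ξ02 := by
    by_contra h
    push_neg at h
    have hmono : MonotoneOn T (Icc ξ01 ξ02) := by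
      refine rho_aux_mono (g := D) h01 hT' ?_
      intro x hx
      rw [hDfac x (h01.trans hx.1)]
      have h1 : x ^ ((2:ℝ)/3) ≤ 3 * C / 4 := by
        rw [← hs23]
        exact hrpow_le _ _ (h01.le.trans hx.1.le) (hx.2.le.trans h)
      have h2 : 0 ≤ 2 * C - 8/3 * x ^ ((2:ℝ)/3) := by linarith
      exact mul_nonneg (h01.trans hx.1).le h2
    have hle : T ξ00 ≤ T ξ02 := hmono ⟨h00.1.le, h00.2.le⟩ (right_mem_Icc.mpr h12.le) h00.2.le
    rw [hz2'] at hle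
    exact absurd (hpos' ξ00 h00) hle.not_gt
  -- choose cut points a, b
  set a : ℝ := min ξ00 ((ξ01 + s)/2) with hadef
  set b : ℝ := max ξ00 ((ξ02 + s)/2) with hbdef
  have ha1 : ξ01 < a := lt_min h00.1 (by linarith)
  have ha0 : 0 < a := h01.trans ha1
  have ha00 : a ≤ ξ00 := min_le_left _ _
  have has : a < s := lt_of_le_of_lt (min_le_right _ _) (by linarith)
  have hb2 : b < ξ02 := max_lt h00.2 (by linarith)
  have hb00 : ξ00 ≤ b := le_max_left _ _
  have hbs : s < b := lt_of_lt_of_le (by linarith) (le_max_right _ _)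
  have hb1 : ξ01 < b := h00.1.trans_le hb00
  have hb0 : 0 < b := h01.trans hb1
  -- lower slope near ξ01
  set m1 : ℝ := ξ01 * (2 * C - 8/3 * a ^ ((2:ℝ)/3)) with hm1def
  have ha23 : a ^ ((2:ℝ)/3) < 3 * C / 4 := by
    rw [← hs23]; exact hrpow_lt _ _ ha0.le has
  have hm1 : 0 < m1 := mul_pos h01 (by linarith)
  have hTlb1 : ∀ x ∈ Icc ξ01 a, m1 * (x - ξ01) ≤ T x := by
    have hmono : MonotoneOn (fun t => T t - m1 * t) (Icc ξ01 a) := by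
      refine rho_aux_mono (g := fun x => D x - m1) h01 ?_ ?_
      · intro x hx
        exact ((hT' x hx).sub ((hasDerivAt_id x).const_mul m1)).congr_deriv (by ring)
      · intro x hx
        show 0 ≤ D x - m1
        rw [hDfac x (h01.trans hx.1)]
        have hx23 : x ^ ((2:ℝ)/3) ≤ a ^ ((2:ℝ)/3) := hrpow_le _ _ (h01.le.trans hx.1.le) hx.2.le
        have hkey : m1 ≤ x * (2 * C - 8/3 * x ^ ((2:ℝ)/3)) := by
          rw [hm1def]
          apply mul_le_mul hx.1.le (by linarith) (by linarith) (by linarith [hx.1])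
        linarith
    intro x hx
    have h' : T ξ01 - m1 * ξ01 ≤ T x - m1 * x := hmono (left_mem_Icc.mpr ha1.le) hx hx.1
    linarith [hz1']
  -- lower slope near ξ02
  set m2 : ℝ := ξ01 * (8/3 * b ^ ((2:ℝ)/3) - 2 * C) with hm2def
  have hb23 : 3 * C / 4 < b ^ ((2:ℝ)/3) := by
    rw [← hs23]; exact hrpow_lt _ _ (Real.rpow_nonneg hsC.le _) hbs
  have hm2 : 0 < m2 := mul_pos h01 (by linarith)
  have hTlb2 : ∀ x ∈ Icc b ξ02, m2 * (ξ02 - x) ≤ T x := by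
    have hanti : AntitoneOn (fun t => T t + m2 * t) (Icc b ξ02) := by
      refine rho_aux_anti (g := fun x => D x + m2) hb0 ?_ ?_
      · intro x hx
        exact ((hT' x hx).add ((hasDerivAt_id x).const_mul m2)).congr_deriv (by ring)
      · intro x hx
        show D x + m2 ≤ 0
        rw [hDfac x (hb0.trans hx.1)]
        have hx23 : b ^ ((2:ℝ)/3) ≤ x ^ ((2:ℝ)/3) := hrpow_le _ _ hb0.le hx.1.le
        have he : 2 * C - 8/3 * x ^ ((2:ℝ)/3) ≤ -(8/3 * b ^ ((2:ℝ)/3) - 2 * C) := by linarith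
        have hx0 : (0:ℝ) ≤ x := (hb0.trans hx.1).le
        have step1 : x * (2 * C - 8/3 * x ^ ((2:ℝ)/3)) ≤ x * (-(8/3 * b ^ ((2:ℝ)/3) - 2 * C)) :=
          mul_le_mul_of_nonneg_left he hx0
        have step2 : ξ01 * (8/3 * b ^ ((2:ℝ)/3) - 2 * C) ≤ x * (8/3 * b ^ ((2:ℝ)/3) - 2 * C) :=
          mul_le_mul_of_nonneg_right (hb1.le.trans hx.1.le) (by linarith)
        rw [hm2def]
        linarith
    intro x hx
    have h' : T ξ02 + m2 * ξ02 ≤ T x + m2 * x := hanti hx (right_mem_Icc.mpr hb2.le) hx.2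
    linarith [hz2']
  clear hDfac hT' hrpow_le hrpow_lt ha23 hb23 hm1def hm2def hadef hbdef h1s hs2 has hbs hs23 hsC hsdef
  clear_value a b m1 m2
  clear s hz1 hz2 hpos
  -- continuity / measurability of F
  have hTcont : Continuous T := by
    have h8 : Continuous fun t : ℝ => t ^ ((8:ℝ)/3) := by
      rw [continuous_iff_continuousAt]
      exact fun x => Real.continuousAt_rpow_const x _ (Or.inr (by norm_num))
    exact (h8.neg.add (continuous_const.mul (continuous_pow 2))).sub continuous_const
  have hFmeas : Measurable F :=
    Real.continuous_sqrt.measurable.comp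
      (measurable_const.div ((continuous_pow 2).measurable.mul hTcont.measurable))
  have hFcontAt : ∀ x, ξ01 < x → x < ξ02 → ContinuousAt F x := by
    intro x hx1 hx2
    have hx0 : 0 < x := h01.trans hx1
    have hT0 : 0 < T x := hpos' x ⟨hx1, hx2⟩
    have hden : ContinuousAt (fun τ : ℝ => τ ^ 2 * T τ) x :=
      ((continuous_pow 2).continuousAt).mul hTcont.continuousAt
    have hne : x ^ 2 * T x ≠ 0 := (mul_pos (pow_pos hx0 2) hT0).ne'
    exact Real.continuous_sqrt.continuousAt.comp (continuousAt_const.div hden hne)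
  have hFnonneg : ∀ τ, 0 ≤ F τ := fun τ => Real.sqrt_nonneg _
  -- piece 1 : integrable on [ξ01, a]
  have hI1 : IntervalIntegrable F volume ξ01 a := by
    have h0 : IntervalIntegrable (fun x : ℝ => x ^ (-(1/2) : ℝ)) volume 0 (a - ξ01) :=
      intervalIntegrable_rpow' (by norm_num)
    have h1 := h0.comp_sub_right ξ01
    simp only [zero_add, sub_add_cancel] at h1
    apply (h1.const_mul (Real.sqrt (3 / (ξ01 ^ 2 * m1)))).mono_fun'
      hFmeas.aestronglyMeasurable
    refine (ae_restrict_iff' measurableSet_uIoc).mpr (ae_of_all _ ?_)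
    intro τ hτ
    rw [Set.uIoc_of_le ha1.le] at hτ
    obtain ⟨hτ1, hτ2⟩ := hτ
    have hsp : 0 < τ - ξ01 := by linarith
    have hT1 : m1 * (τ - ξ01) ≤ T τ := hTlb1 τ ⟨hτ1.le, hτ2⟩
    have hpos1 : 0 < ξ01 ^ 2 * (m1 * (τ - ξ01)) :=
      mul_pos (pow_pos h01 2) (mul_pos hm1 hsp)
    have hle : 3 / (τ ^ 2 * T τ) ≤ 3 / (ξ01 ^ 2 * (m1 * (τ - ξ01))) := by
      apply div_le_div_of_nonneg_left (by norm_num) hpos1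
      exact mul_le_mul (pow_le_pow_left₀ h01.le hτ1.le 2) hT1 (mul_pos hm1 hsp).le (sq_nonneg τ)
    show ‖F τ‖ ≤ _
    rw [Real.norm_eq_abs, abs_of_nonneg (hFnonneg τ)]
    calc F τ ≤ Real.sqrt (3 / (ξ01 ^ 2 * (m1 * (τ - ξ01)))) := Real.sqrt_le_sqrt hle
    _ = Real.sqrt (3 / (ξ01 ^ 2 * m1)) * (τ - ξ01) ^ (-(1/2) : ℝ) := by
        rw [show (3:ℝ) / (ξ01 ^ 2 * (m1 * (τ - ξ01))) = 3 / (ξ01 ^ 2 * m1) * (τ - ξ01)⁻¹ by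
          field_simp]
        rw [Real.sqrt_mul (by positivity) _, Real.sqrt_inv, Real.rpow_neg hsp.le,
          ← Real.sqrt_eq_rpow]
  -- piece 3 : integrable on [b, ξ02]
  have hI3 : IntervalIntegrable F volume b ξ02 := by
    have h0 : IntervalIntegrable (fun x : ℝ => x ^ (-(1/2) : ℝ)) volume 0 (ξ02 - b) :=
      intervalIntegrable_rpow' (by norm_num)
    have h1 := h0.comp_sub_left ξ02
    simp only [sub_zero, sub_sub_cancel] at h1
    apply ((h1.const_mul (Real.sqrt (3 / (ξ01 ^ 2 * m2)))).symm).mono_fun'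
      hFmeas.aestronglyMeasurable
    refine (ae_restrict_iff' measurableSet_uIoc).mpr (ae_of_all _ ?_)
    intro τ hτ
    rw [Set.uIoc_of_le hb2.le] at hτ
    obtain ⟨hτ1, hτ2⟩ := hτ
    show ‖F τ‖ ≤ _
    rw [Real.norm_eq_abs, abs_of_nonneg (hFnonneg τ)]
    rcases eq_or_lt_of_le hτ2 with rfl | hlt
    · have : F τ = 0 := by
        simp only [hFdef, hz2', mul_zero, div_zero, Real.sqrt_zero]
      rw [this]
      exact mul_nonneg (Real.sqrt_nonneg _) (Real.rpow_nonneg (by simp) _)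
    · have hsp : 0 < ξ02 - τ := by linarith
      have hT1 : m2 * (ξ02 - τ) ≤ T τ := hTlb2 τ ⟨hτ1.le, hτ2⟩
      have hpos1 : 0 < ξ01 ^ 2 * (m2 * (ξ02 - τ)) :=
        mul_pos (pow_pos h01 2) (mul_pos hm2 hsp)
      have hτ1' : ξ01 ≤ τ := hb1.le.trans hτ1.le
      have hle : 3 / (τ ^ 2 * T τ) ≤ 3 / (ξ01 ^ 2 * (m2 * (ξ02 - τ))) := by
        apply div_le_div_of_nonneg_left (by norm_num) hpos1
        exact mul_le_mul (pow_le_pow_left₀ h01.le hτ1' 2) hT1 (mul_pos hm2 hsp).le (sq_nonneg τ)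
      calc F τ ≤ Real.sqrt (3 / (ξ01 ^ 2 * (m2 * (ξ02 - τ)))) := Real.sqrt_le_sqrt hle
      _ = Real.sqrt (3 / (ξ01 ^ 2 * m2)) * (ξ02 - τ) ^ (-(1/2) : ℝ) := by
          rw [show (3:ℝ) / (ξ01 ^ 2 * (m2 * (ξ02 - τ))) = 3 / (ξ01 ^ 2 * m2) * (ξ02 - τ)⁻¹ by
            field_simp]
          rw [Real.sqrt_mul (by positivity) _, Real.sqrt_inv, Real.rpow_neg hsp.le,
            ← Real.sqrt_eq_rpow]
  -- middle piece
  have hI2 : IntervalIntegrable F volume a b := by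
    apply ContinuousOn.intervalIntegrable
    intro x hx
    rw [uIcc_of_le (ha00.trans hb00)] at hx
    exact (hFcontAt x (ha1.trans_le hx.1) (lt_of_le_of_lt hx.2 hb2)).continuousWithinAt
  have hI : IntervalIntegrable F volume ξ01 ξ02 := (hI1.trans hI2).trans hI3
  have hIsub : ∀ u v, u ∈ Icc ξ01 ξ02 → v ∈ Icc ξ01 ξ02 → IntervalIntegrable F volume u v := by
    intro u v hu hv
    exact hI.mono_set (uIcc_subset_uIcc (by rwa [uIcc_of_le h12.le]) (by rwa [uIcc_of_le h12.le]))
  have hFpos : ∀ t ∈ Ioo ξ01 ξ02, 0 < F t := by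
    intro t ht
    exact Real.sqrt_pos.mpr
      (div_pos (by norm_num) (mul_pos (pow_pos (h01.trans ht.1) 2) (hpos' t ht)))
  have h00m : ξ00 ∈ Icc ξ01 ξ02 := ⟨h00.1.le, h00.2.le⟩
  constructor
  · -- strict antitone
    intro x hx y hy hxy
    have hIxy : IntervalIntegrable F volume x y :=
      hIsub x y ⟨hx.1.le, hx.2.le⟩ ⟨hy.1.le, hy.2.le⟩
    have hsum : ∫ τ in ξ00..y, F τ = (∫ τ in ξ00..x, F τ) + ∫ τ in x..y, F τ :=
      (integral_add_adjacent_intervals (hIsub ξ00 x h00m ⟨hx.1.le, hx.2.le⟩) hIxy).symm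
    have hpos2 : 0 < ∫ τ in x..y, F τ := by
      apply intervalIntegral_pos_of_pos_on hIxy ?_ hxy
      intro t ht
      exact hFpos t ⟨hx.1.trans ht.1, ht.2.trans hy.2⟩
    rw [hrho, hrho]
    linarith
  · -- limits
    have hPc : ContinuousOn (fun ξ => ∫ τ in ξ00..ξ, F τ) (uIcc ξ01 ξ02) :=
      continuousOn_primitive_interval' hI (by rwa [uIcc_of_le h12.le])
    refine ⟨-∫ τ in ξ00..ξ01, F τ, -∫ τ in ξ00..ξ02, F τ, ?_, ?_, ?_, ?_⟩
    · have h1 : (0:ℝ) < ∫ τ in ξ01..ξ00, F τ := by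
        apply intervalIntegral_pos_of_pos_on
          (hIsub ξ01 ξ00 (left_mem_Icc.mpr h12.le) h00m) ?_ h00.1
        intro t ht
        exact hFpos t ⟨ht.1, ht.2.trans h00.2⟩
      rw [integral_symm]
      linarith
    · have h1 : (0:ℝ) < ∫ τ in ξ00..ξ02, F τ := by
        apply intervalIntegral_pos_of_pos_on
          (hIsub ξ00 ξ02 h00m (right_mem_Icc.mpr h12.le)) ?_ h00.2
        intro t ht
        exact hFpos t ⟨h00.1.trans ht.1, ht.2⟩
      linarith
    · have hcw : ContinuousWithinAt (fun ξ => ∫ τ in ξ00..ξ, F τ) (uIcc ξ01 ξ02) ξ01 :=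
        hPc ξ01 (by rw [uIcc_of_le h12.le]; exact left_mem_Icc.mpr h12.le)
      have h1 : Tendsto (fun ξ => ∫ τ in ξ00..ξ, F τ) (nhdsWithin ξ01 (Ioo ξ01 ξ02))
          (nhds (∫ τ in ξ00..ξ01, F τ)) :=
        hcw.mono_left (nhdsWithin_mono _ (by rw [uIcc_of_le h12.le]; exact Ioo_subset_Icc_self))
      rw [nhdsWithin_Ioo_eq_nhdsGT h12] at h1
      exact h1.neg
    · have hcw : ContinuousWithinAt (fun ξ => ∫ τ in ξ00..ξ, F τ) (uIcc ξ01 ξ02) ξ02 :=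
        hPc ξ02 (by rw [uIcc_of_le h12.le]; exact right_mem_Icc.mpr h12.le)
      have h1 : Tendsto (fun ξ => ∫ τ in ξ00..ξ, F τ) (nhdsWithin ξ02 (Ioo ξ01 ξ02))
          (nhds (∫ τ in ξ00..ξ02, F τ)) :=
        hcw.mono_left (nhdsWithin_mono _ (by rw [uIcc_of_le h12.le]; exact Ioo_subset_Icc_self))
      rw [nhdsWithin_Ioo_eq_nhdsLT h12] at h1
      exact h1.neg
end

section
/- Let C > 4/√3 and ξ₀₂ the larger positive zero of T(ξ) = -ξ^{8/3} + Cξ² - 3. Then lim_{ξ↗ξ₀₂} √(ξ₀₂ - ξ) / √(T(ξ)) = √(3/(8ξ₀₂^{5/3} - 6Cξ₀₂)), and in particular 8ξ₀₂^{5/3} - 6Cξ₀₂ > 0. -/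
open Set Filter

/-- At the larger zero `ξ02 > (3C/4)^(3/2)` of `T ξ = -ξ^(8/3)+Cξ²-3`, we have
`8 ξ02^(5/3) - 6 C ξ02 > 0` and `√(ξ02-ξ)/√(T ξ) → √(3/(8ξ02^(5/3)-6Cξ02))` as `ξ ↗ ξ02`. -/
theorem stmt_5 (C ξ02 : ℝ) (hC : C > 4 / Real.sqrt 3)
    (hgt : (3 * C / 4) ^ ((3:ℝ)/2) < ξ02)
    (hz : -ξ02 ^ ((8:ℝ)/3) + C * ξ02 ^ 2 - 3 = 0) :
    0 < 8 * ξ02 ^ ((5:ℝ)/3) - 6 * C * ξ02 ∧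
    Tendsto (fun ξ => Real.sqrt (ξ02 - ξ) / Real.sqrt (-ξ ^ ((8:ℝ)/3) + C * ξ ^ 2 - 3))
      (nhdsWithin ξ02 (Iio ξ02))
      (nhds (Real.sqrt (3 / (8 * ξ02 ^ ((5:ℝ)/3) - 6 * C * ξ02)))) := by
  have hs3 : (0:ℝ) < Real.sqrt 3 := Real.sqrt_pos.mpr (by norm_num)
  have hCpos : 0 < C := lt_trans (div_pos (by norm_num) hs3) hC
  have h34 : (0:ℝ) < 3 * C / 4 := by linarith
  have hpos : 0 < ξ02 := lt_trans (Real.rpow_pos_of_pos h34 _) hgt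
  -- ξ02 ^ (2/3) > 3C/4
  have key : 3 * C / 4 < ξ02 ^ ((2:ℝ)/3) := by
    have h1 : ((3 * C / 4) ^ ((3:ℝ)/2)) ^ ((2:ℝ)/3) < ξ02 ^ ((2:ℝ)/3) :=
      Real.rpow_lt_rpow (Real.rpow_nonneg h34.le _) hgt (by norm_num)
    rwa [← Real.rpow_mul h34.le, show (3:ℝ)/2 * (2/3) = 1 by norm_num,
      Real.rpow_one] at h1
  have h53 : ξ02 ^ ((5:ℝ)/3) = ξ02 * ξ02 ^ ((2:ℝ)/3) := by
    rw [show (5:ℝ)/3 = 1 + 2/3 by norm_num, Real.rpow_add hpos, Real.rpow_one]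
  have hE : 0 < 8 * ξ02 ^ ((5:ℝ)/3) - 6 * C * ξ02 := by
    rw [h53]; nlinarith [hpos, key]
  refine ⟨hE, ?_⟩
  set E := 8 * ξ02 ^ ((5:ℝ)/3) - 6 * C * ξ02 with hEdef
  set T : ℝ → ℝ := fun ξ => -ξ ^ ((8:ℝ)/3) + C * ξ ^ 2 - 3 with hTdef
  have hd : HasDerivAt T (-(E/3)) ξ02 := by
    have h1 : HasDerivAt (fun ξ : ℝ => ξ ^ ((8:ℝ)/3)) ((8:ℝ)/3 * ξ02 ^ ((8:ℝ)/3 - 1)) ξ02 :=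
      Real.hasDerivAt_rpow_const (Or.inl hpos.ne')
    have h2 : HasDerivAt (fun ξ : ℝ => ξ ^ 2) (2 * ξ02 ^ 1) ξ02 := hasDerivAt_pow 2 ξ02
    have h3 := ((h1.neg).add (h2.const_mul C)).sub_const 3
    have : -((8:ℝ)/3 * ξ02 ^ ((8:ℝ)/3 - 1)) + C * (2 * ξ02 ^ 1) = -(E/3) := by
      rw [show (8:ℝ)/3 - 1 = 5/3 by norm_num, hEdef]; ring
    rw [this] at h3
    exact h3
  have hdne : (-(E/3)) ≠ 0 := by
    simp only [neg_ne_zero]; positivity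
  have hslope : Tendsto (fun ξ => T ξ / (ξ - ξ02)) (nhdsWithin ξ02 (Iio ξ02))
      (nhds (-(E/3))) := by
    have h := hasDerivAt_iff_tendsto_slope.mp hd
    have h' := h.mono_left (nhdsWithin_mono _ (fun x hx => ne_of_lt hx))
    refine h'.congr (fun ξ => ?_)
    rw [slope_def_field, hTdef]
    simp only
    rw [hz]
    ring_nf
  have hrat : Tendsto (fun ξ => (ξ02 - ξ) / T ξ) (nhdsWithin ξ02 (Iio ξ02))
      (nhds (3 / E)) := by
    have h := (hslope.inv₀ hdne).neg
    have heq : -(-(E/3))⁻¹ = 3 / E := by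
      rw [inv_neg, neg_neg, inv_div]
    rw [heq] at h
    refine h.congr (fun ξ => ?_)
    rw [inv_div, ← neg_div, neg_sub]
  have hfinal := (Real.continuous_sqrt.continuousAt.tendsto.comp hrat)
  refine hfinal.congr' ?_
  filter_upwards [self_mem_nhdsWithin] with ξ (hξ : ξ < ξ02)
  simp only [Function.comp_apply]
  rw [Real.sqrt_div (by linarith : (0:ℝ) ≤ ξ02 - ξ)]
end

section
/- For any real C and fixed ξ₀₀ ∈ (0, ξ₀₂), where ξ₀₂ is the positive zero of T(ξ) = -ξ^{8/3} + Cξ² + 3, the function ρ₀(ξ) = -∫_{ξ₀₀}^{ξ} √(3/(τ²·T(τ))) dτ satisfies lim_{ξ↘0} ρ₀(ξ) = +∞. -/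
open Set Filter

/-- Case ε = -1: with `T ξ = -ξ^(8/3)+Cξ²+3` positive on `(0, ξ02)` (its unique positive
zero being `ξ02`) and `ξ00 ∈ (0, ξ02)`, the function
`ρ₀(ξ) = -∫_{ξ00}^{ξ} √(3/(τ² T(τ))) dτ` tends to `+∞` as `ξ ↘ 0`. -/
theorem stmt_7 (C ξ02 ξ00 : ℝ) (h02 : 0 < ξ02)
    (hz : -ξ02 ^ ((8:ℝ)/3) + C * ξ02 ^ 2 + 3 = 0)
    (hpos : ∀ ξ ∈ Ioo (0:ℝ) ξ02, 0 < -ξ ^ ((8:ℝ)/3) + C * ξ ^ 2 + 3)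
    (h00 : ξ00 ∈ Ioo (0:ℝ) ξ02) :
    Tendsto (fun ξ => -∫ τ in ξ00..ξ,
        Real.sqrt (3 / (τ ^ 2 * (-τ ^ ((8:ℝ)/3) + C * τ ^ 2 + 3))))
      (nhdsWithin 0 (Ioi 0)) atTop := by
  obtain ⟨h00l, h00r⟩ := h00
  set T : ℝ → ℝ := fun τ => -τ ^ ((8:ℝ)/3) + C * τ ^ 2 + 3 with hT
  set f : ℝ → ℝ := fun τ => Real.sqrt (3 / (τ ^ 2 * T τ)) with hf
  set M : ℝ := |C| * ξ02 ^ 2 + 3 with hM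
  have hMpos : 0 < M := by positivity
  set c : ℝ := Real.sqrt (3 / M) with hc
  have hcpos : 0 < c := Real.sqrt_pos.mpr (by positivity)
  -- T τ ≤ M on (0, ξ02)
  have hTle : ∀ τ ∈ Ioo (0:ℝ) ξ02, T τ ≤ M := by
    intro τ ⟨h1, h2⟩
    have h8 : (0:ℝ) ≤ τ ^ ((8:ℝ)/3) := Real.rpow_nonneg h1.le _
    have : C * τ ^ 2 ≤ |C| * ξ02 ^ 2 := by
      calc C * τ ^ 2 ≤ |C| * τ ^ 2 := by
              apply mul_le_mul_of_nonneg_right (le_abs_self C) (by positivity)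
        _ ≤ |C| * ξ02 ^ 2 := by
              apply mul_le_mul_of_nonneg_left _ (abs_nonneg C)
              exact pow_le_pow_left₀ h1.le h2.le 2
    simp only [hT, hM]
    linarith
  -- lower bound for the function
  have key : ∀ ξ ∈ Ioo (0:ℝ) ξ00,
      c * Real.log (ξ00 / ξ) ≤ -∫ τ in ξ00..ξ, f τ := by
    intro ξ ⟨hξ0, hξ00⟩
    rw [← intervalIntegral.integral_symm]
    have hsub : Icc ξ ξ00 ⊆ Ioo (0:ℝ) ξ02 := fun τ ⟨ha, hb⟩ =>
      ⟨lt_of_lt_of_le hξ0 ha, lt_of_le_of_lt hb h00r⟩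
    have hTpos : ∀ τ ∈ Icc ξ ξ00, 0 < T τ := fun τ hτ => hpos τ (hsub hτ)
    have hτpos : ∀ τ ∈ Icc ξ ξ00, 0 < τ := fun τ hτ => (hsub hτ).1
    -- continuity / integrability of f
    have hcontT : ContinuousOn T (Icc ξ ξ00) := by
      apply ContinuousOn.add (ContinuousOn.add _ (by fun_prop)) continuousOn_const
      apply ContinuousOn.neg
      intro x hx
      exact (Real.continuousAt_rpow_const x _ (Or.inr (by norm_num))).continuousWithinAt
    have hcontf : ContinuousOn f (Icc ξ ξ00) := by
      apply Real.continuous_sqrt.comp_continuousOn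
      apply ContinuousOn.div continuousOn_const ((continuousOn_pow 2).mul hcontT)
      intro τ hτ
      have := hTpos τ hτ
      have := hτpos τ hτ
      exact (mul_pos (pow_pos ‹0 < τ› 2) ‹0 < T τ›).ne'
    have hintf : IntervalIntegrable f MeasureTheory.volume ξ ξ00 := by
      apply ContinuousOn.intervalIntegrable
      rwa [uIcc_of_le hξ00.le]
    have hintg : IntervalIntegrable (fun τ => c * (1 / τ)) MeasureTheory.volume ξ ξ00 := by
      apply ContinuousOn.intervalIntegrable
      rw [uIcc_of_le hξ00.le]
      apply ContinuousOn.mul continuousOn_const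
      apply ContinuousOn.div continuousOn_const continuousOn_id
      intro τ hτ; exact (hτpos τ hτ).ne'
    have hle : ∀ τ ∈ Icc ξ ξ00, c * (1 / τ) ≤ f τ := by
      intro τ hτ
      have hτp := hτpos τ hτ
      have hTp := hTpos τ hτ
      have hTM := hTle τ (hsub hτ)
      have : c * (1 / τ) = Real.sqrt (3 / (τ ^ 2 * M)) := by
        rw [hc, show (3:ℝ)/(τ^2*M) = (3/M) * (1/τ)^2 by field_simp,
          Real.sqrt_mul (by positivity), Real.sqrt_sq (by positivity)]
      rw [this, hf]
      apply Real.sqrt_le_sqrt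
      apply div_le_div_of_nonneg_left (by norm_num) (by positivity)
      exact mul_le_mul_of_nonneg_left hTM (by positivity)
    calc c * Real.log (ξ00 / ξ)
        = ∫ τ in ξ..ξ00, c * (1 / τ) := by
          rw [intervalIntegral.integral_const_mul, integral_one_div]
          rw [uIcc_of_le hξ00.le]
          intro h
          exact absurd h.1 (not_le.mpr hξ0)
      _ ≤ ∫ τ in ξ..ξ00, f τ :=
          intervalIntegral.integral_mono_on hξ00.le hintg hintf hle
  -- the lower bound tends to atTop
  have hlog : Tendsto (fun ξ : ℝ => c * Real.log (ξ00 / ξ))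
      (nhdsWithin 0 (Ioi 0)) atTop := by
    apply Tendsto.const_mul_atTop hcpos
    have h1 : Tendsto (fun ξ : ℝ => Real.log ξ00 - Real.log ξ)
        (nhdsWithin 0 (Ioi 0)) atTop := by
      apply tendsto_atTop_add_const_left
      exact tendsto_neg_atBot_atTop.comp Real.tendsto_log_nhdsGT_zero
    apply h1.congr'
    filter_upwards [self_mem_nhdsWithin] with ξ (hξ : 0 < ξ)
    rw [Real.log_div (by positivity) hξ.ne']
  apply tendsto_atTop_mono' _ _ hlog
  filter_upwards [Ioo_mem_nhdsGT_of_mem ⟨le_refl 0, h00l⟩] with ξ hξ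
  exact key ξ hξ
end

section
/- The function (K')² = (64/3)K³ - (640/9)εK² + α(ε-K)^{11/4} + (704/9)ε²K - (256/9)ε³ is a first integral of the ODE 24(ε-K)K'' + 33(K')² + 64K(ε-K)² = 0, for any constant α; that is, if K : I → ℝ is smooth with ε - K > 0 and satisfies the displayed algebraic relation with (K')² on I, and K' ≠ 0, then K satisfies the second-order ODE. -/
open Set

/-- The relation `(K')² = (64/3)K³ - (640/9)εK² + α(ε-K)^(11/4) + (704/9)ε²K - (256/9)ε³`
is a first integral of `24(ε-K)K'' + 33(K')² + 64K(ε-K)² = 0`: if a smooth `K` with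
`ε - K > 0`, `K' ≠ 0` satisfies the former on an open interval, it satisfies the latter. -/
theorem stmt_15 (ε α a b : ℝ) (K : ℝ → ℝ)
    (hsmooth : ContDiffOn ℝ (⊤ : ℕ∞) K (Ioo a b))
    (hεK : ∀ u ∈ Ioo a b, K u < ε)
    (hK' : ∀ u ∈ Ioo a b, deriv K u ≠ 0)
    (hrel : ∀ u ∈ Ioo a b,
      (deriv K u) ^ 2 =
        (64/3) * (K u) ^ 3 - (640/9) * ε * (K u) ^ 2 +
        α * (ε - K u) ^ ((11:ℝ)/4) + (704/9) * ε ^ 2 * (K u) - (256/9) * ε ^ 3) :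
    ∀ u ∈ Ioo a b,
      24 * (ε - K u) * deriv (deriv K) u + 33 * (deriv K u) ^ 2 +
        64 * (K u) * (ε - K u) ^ 2 = 0 := by
  intro u hu
  have hs : IsOpen (Ioo a b) := isOpen_Ioo
  have hmem : Ioo a b ∈ nhds u := hs.mem_nhds hu
  have hKd : ContDiffOn ℝ (⊤ : ℕ∞) (deriv K) (Ioo a b) := hsmooth.deriv_of_isOpen hs (by simp)
  have hK1 : DifferentiableAt ℝ K u := (hsmooth.contDiffAt hmem).differentiableAt (by simp)
  have hK2 : DifferentiableAt ℝ (deriv K) u := (hKd.contDiffAt hmem).differentiableAt (by simp)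
  have hdK : HasDerivAt K (deriv K u) u := hK1.hasDerivAt
  have hdK2 : HasDerivAt (deriv K) (deriv (deriv K) u) u := hK2.hasDerivAt
  have hpos : (0:ℝ) < ε - K u := by linarith [hεK u hu]
  -- derivative of the LHS of hrel
  have hL : HasDerivAt (fun x => (deriv K x) ^ 2)
      (2 * deriv K u * deriv (deriv K) u) u := by
    have := hdK2.fun_pow 2
    simpa [mul_comm, mul_assoc, mul_left_comm] using this
  -- derivative of ε - K
  have hsub : HasDerivAt (fun x => ε - K x) (-(deriv K u)) u := by
    simpa using (hasDerivAt_const u ε).fun_sub hdK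
  -- derivative of the rpow term
  have hrp : HasDerivAt (fun x => α * (ε - K x) ^ ((11:ℝ)/4))
      (α * (-(deriv K u) * ((11:ℝ)/4) * (ε - K u) ^ ((11:ℝ)/4 - 1))) u := by
    exact (hsub.rpow_const (Or.inl (ne_of_gt hpos))).const_mul α
  -- derivative of the RHS of hrel
  have hR : HasDerivAt (fun x =>
      (64/3) * (K x) ^ 3 - (640/9) * ε * (K x) ^ 2 +
        α * (ε - K x) ^ ((11:ℝ)/4) + (704/9) * ε ^ 2 * (K x) - (256/9) * ε ^ 3)
      ((64/3) * (3 * (K u) ^ 2 * deriv K u) - (640/9) * ε * (2 * (K u) * deriv K u) +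
        α * (-(deriv K u) * ((11:ℝ)/4) * (ε - K u) ^ ((11:ℝ)/4 - 1)) +
        (704/9) * ε ^ 2 * deriv K u) u := by
    have h3 : HasDerivAt (fun x => (64/3) * (K x) ^ 3)
        ((64/3) * (3 * (K u) ^ 2 * deriv K u)) u := by
      have := (hdK.fun_pow 3).const_mul (64/3 : ℝ)
      refine this.congr_deriv ?_ <;> push_cast <;> ring
    have h2 : HasDerivAt (fun x => (640/9) * ε * (K x) ^ 2)
        ((640/9) * ε * (2 * (K u) * deriv K u)) u := by
      have := (hdK.fun_pow 2).const_mul ((640/9) * ε : ℝ)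
      refine this.congr_deriv ?_ <;> push_cast <;> ring
    have h1 : HasDerivAt (fun x => (704/9) * ε ^ 2 * (K x))
        ((704/9) * ε ^ 2 * deriv K u) u := hdK.const_mul _
    exact (((h3.sub h2).add hrp).add h1).sub_const _
  -- equate the derivatives using local agreement
  have heq : (2 * deriv K u * deriv (deriv K) u) =
      ((64/3) * (3 * (K u) ^ 2 * deriv K u) - (640/9) * ε * (2 * (K u) * deriv K u) +
        α * (-(deriv K u) * ((11:ℝ)/4) * (ε - K u) ^ ((11:ℝ)/4 - 1)) +
        (704/9) * ε ^ 2 * deriv K u) := by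
    have hee : (fun x => (deriv K x) ^ 2) =ᶠ[nhds u] (fun x =>
        (64/3) * (K x) ^ 3 - (640/9) * ε * (K x) ^ 2 +
          α * (ε - K x) ^ ((11:ℝ)/4) + (704/9) * ε ^ 2 * (K x) - (256/9) * ε ^ 3) :=
      Filter.eventuallyEq_of_mem hmem hrel
    calc 2 * deriv K u * deriv (deriv K) u = deriv (fun x => (deriv K x) ^ 2) u := hL.deriv.symm
      _ = _ := by rw [hee.deriv_eq, hR.deriv]
  -- rewrite the exponent
  have hexp : (ε - K u) ^ ((11:ℝ)/4) = (ε - K u) ^ ((11:ℝ)/4 - 1) * (ε - K u) := by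
    rw [← Real.rpow_add_one (ne_of_gt hpos)]
    norm_num
  -- cancel K'
  have hk' := hK' u hu
  have hcancel : 2 * deriv (deriv K) u =
      (64/3) * (3 * (K u) ^ 2) - (640/9) * ε * (2 * (K u)) +
        α * (-((11:ℝ)/4) * (ε - K u) ^ ((11:ℝ)/4 - 1)) + (704/9) * ε ^ 2 := by
    apply mul_right_cancel₀ hk'
    calc 2 * deriv (deriv K) u * deriv K u
        = 2 * deriv K u * deriv (deriv K) u := by ring
      _ = _ := heq
      _ = ((64/3) * (3 * (K u) ^ 2) - (640/9) * ε * (2 * (K u)) +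
            α * (-((11:ℝ)/4) * (ε - K u) ^ ((11:ℝ)/4 - 1)) + (704/9) * ε ^ 2) * deriv K u := by
        ring
  have h2 := hrel u hu
  rw [hexp] at h2
  linear_combination 12 * (ε - K u) * hcancel + 33 * h2
end
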